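/- arXiv:0907.1064 — 4 statements merged into one kernel-verified Lean document; each statement's English description precedes it below -/
import Mathlib

section
/- Jacobian of congruence transformation on symmetric matrices: if Y = A X Aᵀ + C where X, Y are m×m real symmetric matrices, A is an invertible m×m real matrix, and C is a fixed symmetric matrix, then (dY) = |det A|^{m+1} (dX). -/
open Matrix

noncomputable section

/-- The subspace `Sym(m, ℝ)` of symmetric matrices. -/
def symSubmodule (m : ℕ) : Submodule ℝ (Matrix (Fin m) (Fin m) ℝ) where
  carrier := {X | X.IsSymm}
  add_mem' := fun ha hb => ha.add hb
  zero_mem' := by simp [Matrix.IsSymm]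
  smul_mem' := fun c X hX => Matrix.IsSymm.smul hX c

/-!
The congruence `X ↦ A X Aᵀ` is multiplicative in `A`, so by Gaussian elimination it suffices to
treat transvections and diagonal matrices. A transvection is `1 + E` with `E * E = 0`, and then
the congruence is `1 + N` with `N ^ 3 = 0`, so its determinant is `1`. For `A = diagonal d` the
upper-triangular entries `X i j`, `i ≤ j`, are eigen-coordinates with eigenvalues `d i * d j`,
and every `d k` occurs `m + 1` times in their product. Hence the determinant is exactly
`(det A) ^ (m + 1)`.
-/

lemma LinearMap.det_one_add_of_isNilpotent {R M : Type*} [CommRing R] [IsDomain R]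
    [AddCommGroup M] [Module R M] [Module.Finite R M] [Module.Free R M]
    {N : Module.End R M} (hN : IsNilpotent N) : LinearMap.det (1 + N) = 1 := by
  have h := congrArg (Polynomial.eval 1) hN.neg.charpoly_eq_X_pow_finrank
  rwa [LinearMap.eval_charpoly, map_one, sub_neg_eq_add, Polynomial.eval_pow,
    Polynomial.eval_X, one_pow] at h

abbrev SymIndex (m : ℕ) : Type := {p : Fin m × Fin m // p.1 ≤ p.2}

open Finset in
theorem prod_symIndex_mul {M : Type*} [CommMonoid M] {m : ℕ} (d : Fin m → M) :
    ∏ p : SymIndex m, d p.1.1 * d p.1.2 = (∏ i, d i) ^ (m + 1) := by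
  classical
  calc ∏ p : SymIndex m, d p.1.1 * d p.1.2
      = ∏ i, ∏ j ∈ Ici i, d i * d j := by
        rw [← prod_subtype ({p | p.1 ≤ p.2} : Finset (Fin m × Fin m)) (by simp)
          (fun p => d p.1 * d p.2), prod_filter, Fintype.prod_prod_type]
        simp_rw [← prod_filter, filter_le_eq_Ici]
    _ = (∏ i, d i ^ (m - i)) * ∏ j, d j ^ (j + 1 : ℕ) := by
        simp only [prod_mul_distrib, prod_const, Fin.card_Ici]
        rw [prod_comm' (t' := univ) (s' := Iic) (by simp)]
        simp [Fin.card_Iic]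
    _ = (∏ i, d i) ^ (m + 1) := by
        rw [← prod_mul_distrib, ← prod_pow]
        exact prod_congr rfl fun i _ => by rw [← pow_add]; congr 1; omega

def symEquivFun (m : ℕ) : symSubmodule m ≃ₗ[ℝ] (SymIndex m → ℝ) where
  toFun X p := X.1 p.1.1 p.1.2
  map_add' _ _ := rfl
  map_smul' _ _ := rfl
  invFun f := ⟨Matrix.of fun i j => f ⟨(min i j, max i j), min_le_max⟩,
    IsSymm.ext fun i j => by simp only [of_apply, min_comm, max_comm]⟩
  left_inv X := by
    refine Subtype.ext (Matrix.ext fun i j => ?_)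
    rcases le_total i j with h | h
    · simp [h]
    · simpa [h] using X.2.apply i j
  right_inv f := funext fun p => by simp [p.2]

section congrSym

variable {m : ℕ}

def congrSym (A : Matrix (Fin m) (Fin m) ℝ) : Module.End ℝ (symSubmodule m) where
  toFun X := ⟨A * X.1 * Aᵀ, by
    show (A * X.1 * Aᵀ)ᵀ = A * X.1 * Aᵀ
    rw [transpose_mul, transpose_mul, transpose_transpose, X.2.eq, Matrix.mul_assoc]⟩
  map_add' X Y := Subtype.ext (by simp [Matrix.mul_add, Matrix.add_mul])
  map_smul' c X := Subtype.ext (by simp)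

@[simp] lemma coe_congrSym_apply (A : Matrix (Fin m) (Fin m) ℝ) (X : symSubmodule m) :
    (congrSym A X : Matrix (Fin m) (Fin m) ℝ) = A * X * Aᵀ := rfl

lemma congrSym_mul (A B : Matrix (Fin m) (Fin m) ℝ) :
    congrSym (A * B) = congrSym A * congrSym B :=
  LinearMap.ext fun X => Subtype.ext (by simp [transpose_mul, Matrix.mul_assoc])

lemma det_congrSym_one_add {E : Matrix (Fin m) (Fin m) ℝ} (hE : E * E = 0) :
    LinearMap.det (congrSym (1 + E)) = 1 := by
  set N := congrSym (1 + E) - 1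
  have hN : ∀ X : symSubmodule m,
      (N X : Matrix (Fin m) (Fin m) ℝ) = E * X + X * Eᵀ + E * X * Eᵀ := by
    intro X
    simp only [N, LinearMap.sub_apply, Module.End.one_apply, AddSubgroupClass.coe_sub,
      coe_congrSym_apply, transpose_add, transpose_one]
    noncomm_ring
  have hEE : ∀ Y : Matrix (Fin m) (Fin m) ℝ, E * (E * Y) = 0 := fun Y => by
    rw [← Matrix.mul_assoc, hE, Matrix.zero_mul]
  have hEtEt : Eᵀ * Eᵀ = 0 := by rw [← transpose_mul, hE, transpose_zero]
  have hN3 : N ^ 3 = 0 := LinearMap.ext fun X => Subtype.ext <| by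
    simp only [pow_succ, pow_zero, one_mul, Module.End.mul_apply, hN]
    simp only [Matrix.mul_add, Matrix.add_mul, Matrix.mul_assoc, hEE, hEtEt,
      Matrix.mul_zero, Matrix.zero_mul, add_zero, zero_add]
    rfl
  rw [← add_sub_cancel 1 (congrSym (1 + E))]
  exact LinearMap.det_one_add_of_isNilpotent ⟨3, hN3⟩

lemma det_congrSym_diagonal (d : Fin m → ℝ) :
    LinearMap.det (congrSym (diagonal d)) = (∏ i, d i) ^ (m + 1) := by
  have hconj : (symEquivFun m : symSubmodule m →ₗ[ℝ] SymIndex m → ℝ) ∘ₗ congrSym (diagonal d)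
      ∘ₗ ((symEquivFun m).symm : (SymIndex m → ℝ) →ₗ[ℝ] symSubmodule m) =
      toLin' (diagonal fun p : SymIndex m => d p.1.1 * d p.1.2) := by
    refine LinearMap.ext fun f => funext fun p => ?_
    have hentry : ((symEquivFun m).symm f : Matrix (Fin m) (Fin m) ℝ) p.1.1 p.1.2 = f p :=
      congrFun ((symEquivFun m).apply_symm_apply f) p
    show (diagonal d * ((symEquivFun m).symm f : Matrix (Fin m) (Fin m) ℝ) * (diagonal d)ᵀ)
      p.1.1 p.1.2 = _
    simp only [diagonal_transpose, mul_diagonal, diagonal_mul, hentry, toLin'_apply,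
      mulVec_diagonal]
    ring
  rw [← LinearMap.det_conj _ (symEquivFun m), hconj, LinearMap.det_toLin', det_diagonal,
    prod_symIndex_mul]

theorem det_congrSym (A : Matrix (Fin m) (Fin m) ℝ) :
    LinearMap.det (congrSym A) = A.det ^ (m + 1) := by
  induction A using diagonal_transvection_induction with
  | hdiag d _ => rw [det_congrSym_diagonal, det_diagonal]
  | htransvec t =>
    rw [TransvectionStruct.det, one_pow]
    exact det_congrSym_one_add (single_mul_single_of_ne _ _ _ _ t.hij.symm _)
  | hmul A B hA hB => rw [congrSym_mul, map_mul, hA, hB, det_mul, mul_pow]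

end congrSym

theorem jacobian_congruence_transformation_general (m : ℕ)
    (A : Matrix (Fin m) (Fin m) ℝ)
    (L : symSubmodule m →ₗ[ℝ] symSubmodule m)
    (hL : ∀ X : symSubmodule m, (L X : Matrix (Fin m) (Fin m) ℝ) = A * (X : Matrix (Fin m) (Fin m) ℝ) * Aᵀ) :
    |LinearMap.det L| = |A.det| ^ (m + 1) := by
  have hLA : L = congrSym A := LinearMap.ext fun X => Subtype.ext (hL X)
  rw [hLA, det_congrSym, abs_pow]

/-- Jacobian of the congruence transformation `X ↦ A X Aᵀ` on symmetric
matrices (the linear part of `Y = A X Aᵀ + C`): the absolute value of its determinant,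
as a linear endomorphism of `Sym(m, ℝ)`, equals `|det A|^{m+1}`. -/
theorem jacobian_congruence_transformation (m : ℕ)
    (A : Matrix (Fin m) (Fin m) ℝ) (hA : IsUnit A.det)
    (C : Matrix (Fin m) (Fin m) ℝ) (hC : C.IsSymm)
    (L : symSubmodule m →ₗ[ℝ] symSubmodule m)
    (hL : ∀ X : symSubmodule m, (L X : Matrix (Fin m) (Fin m) ℝ) = A * (X : Matrix (Fin m) (Fin m) ℝ) * Aᵀ) :
    |LinearMap.det L| = |A.det| ^ (m + 1) :=
  jacobian_congruence_transformation_general m A L hL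
end
end

section
/- Jacobian of scaling an upper triangular matrix by a diagonal matrix: if J = B G where B = diag(b_1,…,b_m) and G is upper triangular with unit diagonal (g_ii = 1), all real, then (dJ) = ∏_{i=1}^m |b_i|^{m-i} (dB)(dG). -/
/-!
Split the upper-triangular coordinates into the diagonal `b` and the strictly upper entries.
For fixed `b` with nonzero entries, `G ↦ BG` acts on the strictly upper entries as the diagonal
scaling `g_ij ↦ b_i g_ij`, whose determinant is `∏_{i<j} b_i = ∏_i b_i ^ (m - i)`; Tonelli then
integrates over `b`, the set where some `b_i` vanishes being null.
-/

open MeasureTheory Matrix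

noncomputable section

/-- Index set for the upper-triangular entries (with diagonal). -/
abbrev UpIdx (m : ℕ) := {p : Fin m × Fin m // p.1 ≤ p.2}

/-- Index set for the strictly upper-triangular entries. -/
abbrev SUpIdx (m : ℕ) := {p : Fin m × Fin m // p.1 < p.2}

/-- Unit upper-triangular matrix built from its strictly upper entries. -/
def unitUpperOf {m : ℕ} (u : SUpIdx m → ℝ) : Matrix (Fin m) (Fin m) ℝ :=
  Matrix.of fun i j => if i = j then 1 else if h : i < j then u ⟨(i, j), h⟩ else 0

/-- Upper-triangular coordinates of a matrix. -/
def upCoord {m : ℕ} (X : Matrix (Fin m) (Fin m) ℝ) : UpIdx m → ℝ :=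
  fun p => X p.1.1 p.1.2

theorem lintegral_eq_lintegral_comp_mul_pi {ι : Type*} [Fintype ι] (c : ι → ℝ) (hc : ∀ i, c i ≠ 0)
    (F : (ι → ℝ) → ENNReal) :
    ∫⁻ u, F u = ∫⁻ u, F (c * u) * ENNReal.ofReal |∏ i, c i| := by
  classical
  have hdet : (diagonal c).det ≠ 0 := by
    rw [det_diagonal]; exact Finset.prod_ne_zero_iff.2 fun i _ => hc i
  have hmul : ⇑(toLin' (diagonal c)) = (c * ·) := by
    funext u i; simp [mulVec_diagonal]
  have hemb : MeasurableEmbedding (c * · : (ι → ℝ) → ι → ℝ) :=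
    (MeasurableEquiv.piCongrRight fun i =>
      MeasurableEquiv.mulLeft₀ (c i) (hc i)).measurableEmbedding
  conv_lhs => rw [← Real.smul_map_diagonal_volume_pi hdet]
  rw [lintegral_smul_measure, hmul, hemb.lintegral_map, det_diagonal, smul_eq_mul, mul_comm,
    lintegral_mul_const' _ _ ENNReal.ofReal_ne_top]

namespace MeasurableEquiv

variable {α ι κ ν : Type*}

def prodPiOfSumEquiv [MeasurableSpace α] (e : ι ⊕ κ ≃ ν) : (ι → α) × (κ → α) ≃ᵐ (ν → α) :=
  (sumPiEquivProdPi fun _ => α).symm.trans (piCongrLeft (fun _ => α) e)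

theorem prodPiOfSumEquiv_apply_equiv [MeasurableSpace α] (e : ι ⊕ κ ≃ ν)
    (p : (ι → α) × (κ → α)) (s : ι ⊕ κ) : prodPiOfSumEquiv e p (e s) = Sum.elim p.1 p.2 s := by
  show Equiv.piCongrLeft (fun _ => α) e ((Equiv.sumPiEquivProdPi fun _ => α).symm p) (e s) = _
  rw [Equiv.piCongrLeft_apply_apply]
  cases s <;> rfl

theorem measurePreserving_prodPiOfSumEquiv [Fintype ι] [Fintype κ] [Fintype ν] [MeasureSpace α]
    [SigmaFinite (volume : Measure α)] (e : ι ⊕ κ ≃ ν) :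
    MeasurePreserving (prodPiOfSumEquiv (α := α) e) volume volume :=
  (volume_measurePreserving_piCongrLeft (fun _ => α) e).comp
    (volume_measurePreserving_sumPiEquivProdPi_symm fun _ => α)

end MeasurableEquiv

namespace UpIdx

variable {m : ℕ}

def diagSumStrictEquiv (m : ℕ) : Fin m ⊕ SUpIdx m ≃ UpIdx m where
  toFun := Sum.elim (fun i => ⟨(i, i), le_rfl⟩) (fun q => ⟨q.1, q.2.le⟩)
  invFun q := if h : q.1.1 < q.1.2 then .inr ⟨q.1, h⟩ else .inl q.1.1
  left_inv s := by
    cases s with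
    | inl i => simp
    | inr q => simp [q.2]
  right_inv q := by
    by_cases h : q.1.1 < q.1.2
    · simp [h]
    · have hdiag : q.1.1 = q.1.2 := le_antisymm q.2 (not_lt.1 h)
      simp only [h, dite_false, Sum.elim_inl]
      exact Subtype.ext (Prod.ext rfl hdiag)

def coordSplit (m : ℕ) : (Fin m → ℝ) × (SUpIdx m → ℝ) ≃ᵐ (UpIdx m → ℝ) :=
  MeasurableEquiv.prodPiOfSumEquiv (diagSumStrictEquiv m)

theorem coordSplit_rowScale (b : Fin m → ℝ) (u : SUpIdx m → ℝ) :
    coordSplit m (b, (fun q => b q.1.1) * u) = upCoord (diagonal b * unitUpperOf u) := by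
  funext q
  obtain ⟨s, rfl⟩ := (diagSumStrictEquiv m).surjective q
  rw [coordSplit, MeasurableEquiv.prodPiOfSumEquiv_apply_equiv]
  cases s with
  | inl i => simp [diagSumStrictEquiv, upCoord, unitUpperOf]
  | inr q => simp [diagSumStrictEquiv, upCoord, unitUpperOf, q.2.ne, q.2.not_ge]

end UpIdx

theorem prod_sUpIdx_fst_eq_prod_pow {M : Type*} [CommMonoid M] {m : ℕ} (f : Fin m → M) :
    ∏ q : SUpIdx m, f q.1.1 = ∏ i, f i ^ (m - (i.val + 1)) := by
  classical
  rw [← Finset.prod_subtype {p : Fin m × Fin m | p.1 < p.2} (by simp) (fun p => f p.1),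
    Finset.prod_filter, Fintype.prod_prod_type]
  refine Finset.prod_congr rfl fun i _ => ?_
  dsimp only
  rw [← Finset.prod_filter, Finset.prod_const, Finset.filter_lt_eq_Ioi, Fin.card_Ioi]
  congr 1
  omega

open UpIdx in
/-- Jacobian of the factorisation `J = B G` of an upper-triangular matrix
into a diagonal matrix `B = diag(b_1,…,b_m)` times a unit upper-triangular `G`:
for every measurable `g`,
`∫ g(J) (dJ) = ∫ g(BG) ∏_{i=1}^m |b_i|^{m-i} (dB)(dG)`,
each side with Lebesgue measure on the corresponding independent entries. -/
theorem jacobian_diagonal_times_unit_upper (m : ℕ)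
    (g : (UpIdx m → ℝ) → ENNReal) (hg : Measurable g) :
    (∫⁻ u : UpIdx m → ℝ, g u) =
      ∫⁻ p : (Fin m → ℝ) × (SUpIdx m → ℝ),
        g (upCoord (Matrix.diagonal p.1 * unitUpperOf p.2)) *
          ENNReal.ofReal (∏ i : Fin m, |p.1 i| ^ (m - (i.val + 1))) := by
  have hsplit : MeasurePreserving (coordSplit m) volume volume :=
    MeasurableEquiv.measurePreserving_prodPiOfSumEquiv _
  have hae : ∀ᵐ b : Fin m → ℝ, ∀ i, b i ≠ 0 := by
    rw [volume_pi]
    exact ae_all_iff.2 fun i => Measure.ae_eval_ne _ i 0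
  have hmeas : Measurable fun p : (Fin m → ℝ) × (SUpIdx m → ℝ) =>
      g (upCoord (Matrix.diagonal p.1 * unitUpperOf p.2)) *
        ENNReal.ofReal (∏ i : Fin m, |p.1 i| ^ (m - (i.val + 1))) := by
    simp_rw [← coordSplit_rowScale]
    refine (hg.comp ((coordSplit m).measurable.comp ?_)).mul ?_ <;> fun_prop
  calc (∫⁻ u : UpIdx m → ℝ, g u)
      = ∫⁻ b, ∫⁻ u, g (coordSplit m (b, u)) := by
        rw [← hsplit.lintegral_comp_emb (coordSplit m).measurableEmbedding, Measure.volume_eq_prod,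
          lintegral_prod _ (by exact (hg.comp (coordSplit m).measurable).aemeasurable)]
    _ = ∫⁻ b, ∫⁻ u, g (upCoord (Matrix.diagonal b * unitUpperOf u)) *
          ENNReal.ofReal (∏ i : Fin m, |b i| ^ (m - (i.val + 1))) := by
        refine lintegral_congr_ae ?_
        filter_upwards [hae] with b hb
        rw [lintegral_eq_lintegral_comp_mul_pi (fun q : SUpIdx m => b q.1.1) fun q => hb _]
        simp only [coordSplit_rowScale, Finset.abs_prod, abs_pow, prod_sUpIdx_fst_eq_prod_pow]
    _ = _ := by rw [Measure.volume_eq_prod, lintegral_prod _ hmeas.aemeasurable]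
end
end

section
/- Jacobian of the matrix square root on positive definite matrices: if S = R² with S, R real symmetric positive definite m×m matrices, and R has eigenvalues d_1 > ⋯ > d_m > 0, then (dS) = 2^m (det R) ∏_{i<j} (d_i + d_j) (dR); equivalently, the absolute determinant of the derivative of R ↦ R² on Sym(m,ℝ) at R equals ∏_{i ≤ j} (d_i + d_j). -/
/-!
Diagonalize `R = U D Uᵀ` with `U` orthogonal. The congruence `H ↦ U H Uᵀ` is an automorphism of
`Sym(m, ℝ)` which conjugates `H ↦ D H + H D` into `H ↦ R H + H R`, so both have the same
determinant. In the basis of `Sym(m, ℝ)` given by the entries `H i j` with `i ≤ j`, the map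
`H ↦ D H + H D` multiplies the coordinate `(i, j)` by `d_i + d_j`.
-/

open Matrix

noncomputable section

theorem Fintype.prod_subtype_fst_le_snd {ι M : Type*} [Fintype ι] [LinearOrder ι]
    [LocallyFiniteOrderTop ι] [CommMonoid M] (f : ι → ι → M) :
    ∏ p : {p : ι × ι // p.1 ≤ p.2}, f p.1.1 p.1.2 = ∏ i, ∏ j ∈ Finset.Ici i, f i j := by
  rw [← Finset.prod_subtype (Finset.univ.filter fun p : ι × ι => p.1 ≤ p.2) (by simp)
      (fun p => f p.1 p.2), Finset.prod_filter, Fintype.prod_prod_type]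
  refine Finset.prod_congr rfl fun i _ => ?_
  rw [← Finset.prod_filter]
  congr 1
  ext j; simp

namespace Matrix.IsHermitian

variable {n : Type*} [Fintype n] [DecidableEq n] {A : Matrix n n ℝ}

theorem eigenvectorUnitary_mul_transpose (hA : A.IsHermitian) :
    (hA.eigenvectorUnitary : Matrix n n ℝ) * (hA.eigenvectorUnitary : Matrix n n ℝ)ᵀ = 1 := by
  simpa [star_eq_conjTranspose] using Unitary.coe_mul_star_self hA.eigenvectorUnitary

theorem eigenvectorUnitary_mul_diagonal_mul_transpose (hA : A.IsHermitian) :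
    (hA.eigenvectorUnitary : Matrix n n ℝ) * diagonal hA.eigenvalues *
      (hA.eigenvectorUnitary : Matrix n n ℝ)ᵀ = A := by
  conv_rhs => rw [hA.spectral_theorem]
  simp [star_eq_conjTranspose]

end Matrix.IsHermitian

namespace symSubmodule

variable {m : ℕ}

theorem mem_iff {X : Matrix (Fin m) (Fin m) ℝ} : X ∈ symSubmodule m ↔ X.IsSymm := Iff.rfl

abbrev UpperIdx (m : ℕ) := {p : Fin m × Fin m // p.1 ≤ p.2}

def ofUpper (f : UpperIdx m → ℝ) : Matrix (Fin m) (Fin m) ℝ :=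
  of fun i j => f ⟨(min i j, max i j), min_le_max⟩

theorem ofUpper_apply_of_le (f : UpperIdx m → ℝ) {i j : Fin m} (h : i ≤ j) :
    ofUpper f i j = f ⟨(i, j), h⟩ := by
  simp only [ofUpper, of_apply, min_eq_left h, max_eq_right h]

theorem ofUpper_isSymm (f : UpperIdx m → ℝ) : (ofUpper f).IsSymm :=
  IsSymm.ext fun i j => by simp only [ofUpper, of_apply, min_comm, max_comm]

theorem apply_min_max (X : symSubmodule m) (i j : Fin m) :
    (X : Matrix (Fin m) (Fin m) ℝ) (min i j) (max i j) = (X : Matrix (Fin m) (Fin m) ℝ) i j := by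
  rcases le_total i j with h | h
  · rw [min_eq_left h, max_eq_right h]
  · rw [min_eq_right h, max_eq_left h, X.2.apply]

def equivUpper (m : ℕ) : symSubmodule m ≃ₗ[ℝ] (UpperIdx m → ℝ) where
  toFun X p := (X : Matrix (Fin m) (Fin m) ℝ) p.1.1 p.1.2
  invFun f := ⟨ofUpper f, ofUpper_isSymm f⟩
  map_add' _ _ := rfl
  map_smul' _ _ := rfl
  left_inv X := Subtype.ext <| ext fun i j => apply_min_max X i j
  right_inv f := funext fun p => ofUpper_apply_of_le f p.2

def basis (m : ℕ) : Module.Basis (UpperIdx m) ℝ (symSubmodule m) :=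
  .ofEquivFun (equivUpper m)

theorem basis_repr_apply (X : symSubmodule m) (p : UpperIdx m) :
    (basis m).repr X p = (X : Matrix (Fin m) (Fin m) ℝ) p.1.1 p.1.2 := rfl

theorem coe_basis_apply (q : UpperIdx m) :
    (basis m q : Matrix (Fin m) (Fin m) ℝ) = ofUpper (Pi.single q 1) := by
  rw [basis, Module.Basis.coe_ofEquivFun]; rfl

-- With `Aᵀ` on the right, `Sym(m, ℝ)` is invariant for every `A`, not only for symmetric `A`.
def lyapunov (A : Matrix (Fin m) (Fin m) ℝ) : symSubmodule m →ₗ[ℝ] symSubmodule m :=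
  (LinearMap.mulLeft ℝ A + LinearMap.mulRight ℝ Aᵀ).restrict fun H (hH : H.IsSymm) => by
    simp [mem_iff, IsSymm, transpose_mul, hH.eq, add_comm]

theorem coe_lyapunov_apply (A : Matrix (Fin m) (Fin m) ℝ) (H : symSubmodule m) :
    (lyapunov A H : Matrix (Fin m) (Fin m) ℝ) = A * H + H * Aᵀ := rfl

def congruence (U : Matrix (Fin m) (Fin m) ℝ) : symSubmodule m →ₗ[ℝ] symSubmodule m :=
  (LinearMap.mulLeft ℝ U ∘ₗ LinearMap.mulRight ℝ Uᵀ).restrict fun H (hH : H.IsSymm) => by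
    simp [mem_iff, IsSymm, transpose_mul, hH.eq, Matrix.mul_assoc]

theorem coe_congruence_apply (U : Matrix (Fin m) (Fin m) ℝ) (H : symSubmodule m) :
    (congruence U H : Matrix (Fin m) (Fin m) ℝ) = U * H * Uᵀ :=
  (Matrix.mul_assoc U (H : Matrix (Fin m) (Fin m) ℝ) Uᵀ).symm

theorem congruence_mul (U V : Matrix (Fin m) (Fin m) ℝ) :
    congruence (U * V) = congruence U ∘ₗ congruence V := by
  ext H : 2
  simp only [coe_congruence_apply, LinearMap.comp_apply, transpose_mul, Matrix.mul_assoc]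

theorem congruence_one : congruence (1 : Matrix (Fin m) (Fin m) ℝ) = LinearMap.id := by
  ext H : 2
  simp [coe_congruence_apply]

def congruenceEquiv {U : Matrix (Fin m) (Fin m) ℝ} (hU : U * Uᵀ = 1) :
    symSubmodule m ≃ₗ[ℝ] symSubmodule m :=
  .ofLinearMap (congruence U) (congruence Uᵀ)
    (by rw [← congruence_mul, hU, congruence_one])
    (by rw [← congruence_mul, mul_eq_one_comm.mp hU, congruence_one])

theorem congruenceEquiv_comp_lyapunov_comp_symm {U : Matrix (Fin m) (Fin m) ℝ} (hU : U * Uᵀ = 1)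
    (A : Matrix (Fin m) (Fin m) ℝ) :
    (congruenceEquiv hU : symSubmodule m →ₗ[ℝ] symSubmodule m) ∘ₗ lyapunov A ∘ₗ
      ((congruenceEquiv hU).symm : symSubmodule m →ₗ[ℝ] symSubmodule m) =
        lyapunov (U * A * Uᵀ) := by
  ext H : 2
  simp only [LinearMap.comp_apply, congruenceEquiv, LinearEquiv.toLinearMap_ofLinearMap,
    LinearEquiv.symm_ofLinearMap, coe_congruence_apply, coe_lyapunov_apply, transpose_mul,
    transpose_transpose]
  have hU_cancel (X : Matrix (Fin m) (Fin m) ℝ) : U * (Uᵀ * X) = X := by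
    rw [← Matrix.mul_assoc, hU, Matrix.one_mul]
  simp only [Matrix.mul_add, Matrix.add_mul, Matrix.mul_assoc, hU, hU_cancel, Matrix.mul_one]

theorem det_lyapunov_conj {U : Matrix (Fin m) (Fin m) ℝ} (hU : U * Uᵀ = 1)
    (A : Matrix (Fin m) (Fin m) ℝ) :
    LinearMap.det (lyapunov (U * A * Uᵀ)) = LinearMap.det (lyapunov A) := by
  rw [← congruenceEquiv_comp_lyapunov_comp_symm hU, LinearMap.det_conj]

theorem toMatrix_lyapunov_diagonal (d : Fin m → ℝ) :
    LinearMap.toMatrix (basis m) (basis m) (lyapunov (diagonal d)) =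
      diagonal fun p : UpperIdx m => d p.1.1 + d p.1.2 := by
  ext p q
  rw [LinearMap.toMatrix_apply, basis_repr_apply, coe_lyapunov_apply, coe_basis_apply,
    diagonal_transpose, Matrix.add_apply, diagonal_mul, mul_diagonal, ofUpper_apply_of_le _ p.2]
  rcases eq_or_ne p q with rfl | hpq
  · simp
  · simp [hpq]

theorem det_lyapunov_diagonal (d : Fin m → ℝ) :
    LinearMap.det (lyapunov (diagonal d)) = ∏ i, ∏ j ∈ Finset.Ici i, (d i + d j) := by
  rw [← LinearMap.det_toMatrix (basis m), toMatrix_lyapunov_diagonal, det_diagonal,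
    Fintype.prod_subtype_fst_le_snd (fun i j => d i + d j)]

theorem det_lyapunov_of_isHermitian {A : Matrix (Fin m) (Fin m) ℝ}
    (hA : A.IsHermitian) :
    LinearMap.det (lyapunov A) =
      ∏ i, ∏ j ∈ Finset.Ici i, (hA.eigenvalues i + hA.eigenvalues j) := by
  conv_lhs => rw [← hA.eigenvectorUnitary_mul_diagonal_mul_transpose]
  rw [det_lyapunov_conj hA.eigenvectorUnitary_mul_transpose, det_lyapunov_diagonal]

end symSubmodule

theorem jacobian_matrix_square_root_general (m : ℕ)
    (R : Matrix (Fin m) (Fin m) ℝ) (hR : R.IsHermitian)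
    (L : symSubmodule m →ₗ[ℝ] symSubmodule m)
    (hL : ∀ H : symSubmodule m, (L H : Matrix (Fin m) (Fin m) ℝ) =
      R * (H : Matrix (Fin m) (Fin m) ℝ) + (H : Matrix (Fin m) (Fin m) ℝ) * R) :
    LinearMap.det L =
      ∏ i : Fin m, ∏ j ∈ Finset.Ici i, (hR.eigenvalues i + hR.eigenvalues j) := by
  have hL_eq : L = symSubmodule.lyapunov R := by
    ext H : 2
    rw [hL, symSubmodule.coe_lyapunov_apply, (isHermitian_iff_isSymm.mp hR).eq]
  rw [hL_eq, symSubmodule.det_lyapunov_of_isHermitian hR]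

/-- Jacobian of the matrix square root `R ↦ S = R²` on positive definite
matrices: the derivative of `R ↦ R²` on `Sym(m, ℝ)` is `H ↦ RH + HR`, and its
determinant equals `∏_{i ≤ j} (d_i + d_j)`, where `d_1, …, d_m` are the eigenvalues
of `R` (so that `(dS) = 2^m (det R) ∏_{i<j}(d_i + d_j) (dR)`, since
`2^m det R = ∏_{i=j}(d_i + d_j)`). -/
theorem jacobian_matrix_square_root (m : ℕ)
    (R : Matrix (Fin m) (Fin m) ℝ) (hR : R.IsHermitian) (hRpd : R.PosDef)
    (L : symSubmodule m →ₗ[ℝ] symSubmodule m)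
    (hL : ∀ H : symSubmodule m, (L H : Matrix (Fin m) (Fin m) ℝ) =
      R * (H : Matrix (Fin m) (Fin m) ℝ) + (H : Matrix (Fin m) (Fin m) ℝ) * R) :
    LinearMap.det L =
      ∏ i : Fin m, ∏ j ∈ Finset.Ici i, (hR.eigenvalues i + hR.eigenvalues j) :=
  jacobian_matrix_square_root_general m R hR L hL
end
end

section
/- Jacobian of the beta I–II change of variables: under the transformation S = (I_m − B)^{-1} − I_m = (I_m − B)^{-1} B between symmetric matrices with 0 < B < I and S positive definite, the Lebesgue measures satisfy (dS) = det(I_m − B)^{-(m+1)} (dB). -/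
/-!
With `A = (I - B)⁻¹`, the derivative `H ↦ A H A` is the congruence action `H ↦ A H Aᵀ` of the
symmetric matrix `A` on `Sym(m, ℝ)`. Congruence is multiplicative in `A`, so an orthogonal
diagonalisation `A = U D Uᵀ` reduces the determinant to that of `D`, which scales the coordinate
`H i j` (`i ≤ j`) by `d i * d j`. Each `d i` occurs `(m - i) + (i + 1) = m + 1` times among
these weights, so the determinant is `(det A) ^ (m + 1)`, positive since `A` is positive definite.
-/

open Matrix

noncomputable section

lemma mem_symSubmodule {m : ℕ} {X : Matrix (Fin m) (Fin m) ℝ} :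
    X ∈ symSubmodule m ↔ X.IsSymm :=
  Iff.rfl

def symEquivUpper (m : ℕ) :
    symSubmodule m ≃ₗ[ℝ] ({p : Fin m × Fin m // p.1 ≤ p.2} → ℝ) where
  toFun H p := (H : Matrix (Fin m) (Fin m) ℝ) p.1.1 p.1.2
  map_add' _ _ := rfl
  map_smul' _ _ := rfl
  invFun f := ⟨Matrix.of fun i j => f ⟨(min i j, max i j), min_le_max⟩, by
    ext i j
    simp [min_comm, max_comm]⟩
  left_inv H := by
    ext i j
    rcases le_total i j with h | h
    · simp [h]
    · simpa [h] using (mem_symSubmodule.1 H.2).apply i j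
  right_inv f := by
    funext p
    simp [p.2]

lemma symEquivUpper_apply {m : ℕ} (H : symSubmodule m) (p : {p : Fin m × Fin m // p.1 ≤ p.2}) :
    symEquivUpper m H p = (H : Matrix (Fin m) (Fin m) ℝ) p.1.1 p.1.2 :=
  rfl

def symCongr {m : ℕ} (A : Matrix (Fin m) (Fin m) ℝ) : symSubmodule m →ₗ[ℝ] symSubmodule m where
  toFun H := ⟨A * H * Aᵀ, by
    simp [mem_symSubmodule, IsSymm, transpose_mul, (mem_symSubmodule.1 H.2).eq, Matrix.mul_assoc]⟩
  map_add' _ _ := Subtype.ext <| by simp [Matrix.mul_add, Matrix.add_mul]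
  map_smul' _ _ := Subtype.ext <| by simp

@[simp]
lemma coe_symCongr_apply {m : ℕ} (A : Matrix (Fin m) (Fin m) ℝ) (H : symSubmodule m) :
    (symCongr A H : Matrix (Fin m) (Fin m) ℝ) = A * H * Aᵀ :=
  rfl

lemma symCongr_mul {m : ℕ} (A C : Matrix (Fin m) (Fin m) ℝ) :
    symCongr (A * C) = symCongr A ∘ₗ symCongr C := by
  ext H : 2
  simp [transpose_mul, Matrix.mul_assoc]

@[simp]
lemma symCongr_one (m : ℕ) : symCongr (1 : Matrix (Fin m) (Fin m) ℝ) = LinearMap.id := by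
  ext H : 2
  simp

lemma prod_upper_pairs {M : Type*} [CommMonoid M] {m : ℕ} (d : Fin m → M) :
    ∏ p : {p : Fin m × Fin m // p.1 ≤ p.2}, d p.1.1 * d p.1.2 = (∏ i, d i) ^ (m + 1) := by
  have hrows : ∏ p : {p : Fin m × Fin m // p.1 ≤ p.2}, d p.1.1 * d p.1.2 =
      ∏ i, ∏ j ∈ Finset.Ici i, d i * d j := by
    rw [← Finset.prod_subtype {p : Fin m × Fin m | p.1 ≤ p.2} (by simp)
        (fun p : Fin m × Fin m => d p.1 * d p.2),
      Finset.prod_filter, Fintype.prod_prod_type]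
    simp_rw [← Finset.prod_filter, Finset.filter_le_eq_Ici]
  rw [hrows]
  simp_rw [Finset.prod_mul_distrib, Finset.prod_const, Fin.card_Ici]
  rw [Finset.prod_comm' (t' := Finset.univ) (s' := Finset.Iic) (by simp)]
  simp_rw [Finset.prod_const, Fin.card_Iic, ← Finset.prod_mul_distrib, ← pow_add, ← Finset.prod_pow]
  refine Finset.prod_congr rfl fun i _ => congrArg _ ?_
  omega

lemma det_symCongr_diagonal {m : ℕ} (d : Fin m → ℝ) :
    LinearMap.det (symCongr (diagonal d)) = (∏ i, d i) ^ (m + 1) := by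
  have hdiag : (symEquivUpper m : symSubmodule m →ₗ[ℝ] _) ∘ₗ symCongr (diagonal d) ∘ₗ
      ((symEquivUpper m).symm : _ →ₗ[ℝ] symSubmodule m) =
      toLin' (diagonal fun p : {p : Fin m × Fin m // p.1 ≤ p.2} => d p.1.1 * d p.1.2) := by
    refine LinearMap.ext fun f => funext fun p => ?_
    have hp : (((symEquivUpper m).symm f : symSubmodule m) : Matrix (Fin m) (Fin m) ℝ)
        p.1.1 p.1.2 = f p := by
      simp [symEquivUpper, p.2]
    simp only [LinearMap.coe_comp, LinearEquiv.coe_coe, Function.comp_apply, symEquivUpper_apply,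
      coe_symCongr_apply, diagonal_transpose, mul_diagonal, diagonal_mul, hp, toLin'_apply,
      mulVec_diagonal]
    ring
  rw [← LinearMap.det_conj _ (symEquivUpper m), hdiag, LinearMap.det_toLin', det_diagonal,
    prod_upper_pairs]

lemma det_symCongr_of_isHermitian {m : ℕ} {A : Matrix (Fin m) (Fin m) ℝ} (hA : A.IsHermitian) :
    LinearMap.det (symCongr A) = A.det ^ (m + 1) := by
  set U : Matrix (Fin m) (Fin m) ℝ := ↑hA.eigenvectorUnitary
  have hstar : star U = Uᵀ := conjTranspose_eq_transpose_of_trivial U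
  have hUUt : U * Uᵀ = 1 := hstar ▸ Unitary.mul_star_self_of_mem hA.eigenvectorUnitary.2
  have hspec : A = U * diagonal hA.eigenvalues * Uᵀ := by
    simpa [Unitary.conjStarAlgAut_apply, U, hstar] using hA.spectral_theorem
  have hUdet : LinearMap.det (symCongr U) * LinearMap.det (symCongr Uᵀ) = 1 := by
    rw [← LinearMap.det_comp, ← symCongr_mul, hUUt, symCongr_one, LinearMap.det_id]
  rw [hA.det_eq_prod_eigenvalues]
  conv_lhs => rw [hspec]
  rw [symCongr_mul, symCongr_mul, LinearMap.det_comp, LinearMap.det_comp, det_symCongr_diagonal]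
  linear_combination (∏ i, hA.eigenvalues i) ^ (m + 1) * hUdet

theorem jacobian_beta_I_II_general (m : ℕ) (B : Matrix (Fin m) (Fin m) ℝ)
    (h1B : (1 - B).PosDef)
    (L : symSubmodule m →ₗ[ℝ] symSubmodule m)
    (hL : ∀ H : symSubmodule m, (L H : Matrix (Fin m) (Fin m) ℝ) =
      (1 - B)⁻¹ * (H : Matrix (Fin m) (Fin m) ℝ) * (1 - B)⁻¹) :
    |LinearMap.det L| = ((1 - B).det)⁻¹ ^ (m + 1) := by
  have hA : (1 - B)⁻¹.PosDef := h1B.inv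
  have hL' : L = symCongr (1 - B)⁻¹ := by
    ext H : 2
    rw [hL, coe_symCongr_apply, (isHermitian_iff_isSymm.1 hA.1).eq]
  rw [hL', det_symCongr_of_isHermitian hA.1, abs_of_pos (pow_pos hA.det_pos _), det_nonsing_inv,
    Ring.inverse_eq_inv']

/-- Jacobian of the beta I–II change of variables
`B ↦ S = (I - B)⁻¹ - I` on symmetric matrices with `0 < B < I`: the derivative of this
map at `B` is `H ↦ (I-B)⁻¹ H (I-B)⁻¹`, and the absolute value of its determinant on
`Sym(m, ℝ)` equals `det(I - B)^{-(m+1)}`, i.e. `(dS) = det(I-B)^{-(m+1)} (dB)`. -/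
theorem jacobian_beta_I_II (m : ℕ) (B : Matrix (Fin m) (Fin m) ℝ)
    (hB : B.PosDef) (h1B : (1 - B).PosDef)
    (L : symSubmodule m →ₗ[ℝ] symSubmodule m)
    (hL : ∀ H : symSubmodule m, (L H : Matrix (Fin m) (Fin m) ℝ) =
      (1 - B)⁻¹ * (H : Matrix (Fin m) (Fin m) ℝ) * (1 - B)⁻¹) :
    |LinearMap.det L| = ((1 - B).det)⁻¹ ^ (m + 1) :=
  jacobian_beta_I_II_general m B h1B L hL
end
end
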